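/- arXiv:1903.10236 — 2 statements merged into one kernel-verified Lean document; each statement's English description precedes it below -/
import Mathlib

section
/- Let S be a locally inverse semigroup and let e, f ∈ E(S). Then there exists an idempotent g such that for every idempotent h: (e*h = h and h*f = h) if and only if (g*h = h and h*g = h). That is, (e]_r ∩ (f]_l = (g] for some idempotent g. -/
variable {S : Type*} [Semigroup S]

/-- An idempotent element. -/
def IsIdem (e : S) : Prop := e * e = e

/-- `a'` is an inverse of `a`. -/
def IsInv (a a' : S) : Prop := a * a' * a = a ∧ a' * a * a' = a'

/-- A regular semigroup: every element has an inverse. -/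
def Regular (S : Type*) [Semigroup S] : Prop := ∀ a : S, ∃ a', IsInv a a'

/-- A locally inverse semigroup: regular, and every local submonoid `eSe`
(for `e` idempotent) is inverse, i.e. every element of `eSe` has a unique
inverse lying in `eSe`. -/
def LocallyInverse (S : Type*) [Semigroup S] : Prop :=
  Regular S ∧ ∀ e : S, IsIdem e → ∀ x : S, (e * x = x ∧ x * e = x) →
    ∃! x' : S, (e * x' = x' ∧ x' * e = x') ∧ IsInv x x'

/-- Green's relation R: same principal right ideal. -/
def RRel (a b : S) : Prop :=
  (insert a {x | ∃ s, x = a * s} : Set S) = insert b {x | ∃ s, x = b * s}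

/-- Green's relation L: same principal left ideal. -/
def LRel (a b : S) : Prop :=
  (insert a {x | ∃ s, x = s * a} : Set S) = insert b {x | ∃ s, x = s * b}

/-- Green's relation D. -/
def DRel (a b : S) : Prop := ∃ c : S, RRel a c ∧ LRel c b

/-- `g` is the sandwich idempotent `e ∧ f` of the idempotents `e`, `f`. -/
def IsSandwich (e f g : S) : Prop :=
  IsIdem g ∧ ∀ h : S, IsIdem h → ((e * h = h ∧ h * f = h) ↔ (g * h = h ∧ h * g = h))

/-- The natural partial order on a regular semigroup. -/
def NatLe (a b : S) : Prop :=
  ∃ e f : S, IsIdem e ∧ IsIdem f ∧ a = e * b ∧ a = b * f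

/- Auxiliary rewriting helpers: lift a relation to a rewrite rule usable
anywhere inside a right-associated word. -/

private lemma sw_w2 {a b c : S} (h : a * b = c) (t : S) : a * (b * t) = c * t := by
  rw [← mul_assoc, h]

private lemma sw_w3 {a b c d : S} (h : a * b * c = d) (t : S) :
    a * (b * (c * t)) = d * t := by
  rw [← mul_assoc, ← mul_assoc, h]

private lemma sw_w4 {a b c d u : S} (h : a * b * c * d = u) (t : S) :
    a * (b * (c * (d * t))) = u * t := by
  rw [← mul_assoc, ← mul_assoc, ← mul_assoc, h]

/-- In a locally inverse semigroup, the product of two idempotents of a local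
submonoid `eSe` is idempotent. -/
private lemma sw_pq_idem (hS : LocallyInverse S) {e p q : S} (he : e * e = e)
    (hep : e * p = p) (hpe : p * e = p) (hpp : p * p = p)
    (heq : e * q = q) (hqe : q * e = q) (hqq : q * q = q) :
    (p * q) * (p * q) = p * q := by
  have hmem1 : e * (p * q) = p * q := by rw [← mul_assoc, hep]
  have hmem2 : (p * q) * e = p * q := by rw [mul_assoc, hqe]
  obtain ⟨y, ⟨⟨hey, hye⟩, hy1, hy2⟩, -⟩ := hS.2 e he (p * q) ⟨hmem1, hmem2⟩
  have hy2' : y * p * q * y = y := by rw [mul_assoc y p q]; exact hy2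
  have hre : e * (q * y * p) = q * y * p := by rw [← mul_assoc, ← mul_assoc, heq]
  have hre' : (q * y * p) * e = q * y * p := by rw [mul_assoc, hpe]
  have hrr : (q * y * p) * (q * y * p) = q * y * p := by
    simp only [mul_assoc]
    rw [sw_w4 hy2']
  have hi1 : (p * q) * (q * y * p) * (p * q) = p * q := by
    simp only [mul_assoc]
    rw [sw_w2 hqq, sw_w2 hpp, ← mul_assoc, ← mul_assoc, hy1]
  have hi2 : (q * y * p) * (p * q) * (q * y * p) = q * y * p := by
    simp only [mul_assoc]
    rw [sw_w2 hpp, sw_w2 hqq, sw_w4 hy2']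
  have hrinv : IsInv (q * y * p) (q * y * p) := ⟨by rw [hrr, hrr], by rw [hrr, hrr]⟩
  have heqr : p * q = q * y * p :=
    (hS.2 e he (q * y * p) ⟨hre, hre'⟩).unique
      ⟨⟨hmem1, hmem2⟩, hi2, hi1⟩ ⟨⟨hre, hre'⟩, hrinv⟩
  rw [heqr]; exact hrr

/-- In a locally inverse semigroup, idempotents of a local submonoid commute. -/
private lemma sw_idem_comm (hS : LocallyInverse S) {e p q : S} (he : e * e = e)
    (hep : e * p = p) (hpe : p * e = p) (hpp : p * p = p)
    (heq : e * q = q) (hqe : q * e = q) (hqq : q * q = q) :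
    p * q = q * p := by
  have hpq := sw_pq_idem hS he hep hpe hpp heq hqe hqq
  have hqp := sw_pq_idem hS he heq hqe hqq hep hpe hpp
  have hm1 : e * (p * q) = p * q := by rw [← mul_assoc, hep]
  have hm2 : (p * q) * e = p * q := by rw [mul_assoc, hqe]
  have hm3 : e * (q * p) = q * p := by rw [← mul_assoc, heq]
  have hm4 : (q * p) * e = q * p := by rw [mul_assoc, hpe]
  have hinvA : IsInv (p * q) (q * p) := by
    constructor
    · simp only [mul_assoc]
      rw [sw_w2 hqq, sw_w2 hpp, ← mul_assoc, hpq]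
    · simp only [mul_assoc]
      rw [sw_w2 hpp, sw_w2 hqq, ← mul_assoc, hqp]
  have hinvB : IsInv (p * q) (p * q) := ⟨by rw [hpq, hpq], by rw [hpq, hpq]⟩
  exact (hS.2 e he (p * q) ⟨hm1, hm2⟩).unique ⟨⟨hm1, hm2⟩, hinvB⟩ ⟨⟨hm3, hm4⟩, hinvA⟩

/-- The key step: the sandwich element dominates every idempotent in
`(e]_r ∩ (f]_l`. -/
private lemma sw_key (hS : LocallyInverse S) {e f g h : S}
    (he : e * e = e) (hf : f * f = f)
    (heg : e * g = g) (hgf : g * f = g) (hfge : f * g * e = f * e)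
    (hh : h * h = h) (h1 : e * h = h) (h2 : h * f = h) :
    g * h = h ∧ h * g = h := by
  have S1 : h * (f * e) * h = h := by
    rw [← mul_assoc, h2, mul_assoc, h1, hh]
  have S2 : h * g * h = h := by
    have expand : h * f * g * e * h = h * g * h := by
      rw [h2, mul_assoc _ e h, h1]
    rw [← expand]
    calc h * f * g * e * h = h * (f * g * e) * h := by simp only [mul_assoc]
      _ = h * (f * e) * h := by rw [hfge]
      _ = h := S1
  -- commuting of h*e and g*h*e in eSe
  have hpp : (h * e) * (h * e) = h * e := by
    rw [mul_assoc, ← mul_assoc e h e, h1, ← mul_assoc, hh]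
  have hep1 : e * (h * e) = h * e := by rw [← mul_assoc, h1]
  have hpe1 : (h * e) * e = h * e := by rw [mul_assoc, he]
  have hqq : (g * h * e) * (g * h * e) = g * h * e := by
    simp only [mul_assoc]
    rw [sw_w2 heg, sw_w3 S2]
  have heq1 : e * (g * h * e) = g * h * e := by rw [← mul_assoc, ← mul_assoc, heg]
  have hqe1 : (g * h * e) * e = g * h * e := by rw [mul_assoc, he]
  have comm1 := sw_idem_comm hS he hep1 hpe1 hpp heq1 hqe1 hqq
  have L1 : (h * e) * (g * h * e) = h * e := by
    simp only [mul_assoc]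
    rw [sw_w2 heg, sw_w3 S2]
  have R1 : (g * h * e) * (h * e) = g * h * e := by
    simp only [mul_assoc]
    rw [sw_w2 h1, sw_w2 hh]
  have E1 : h * e = g * h * e := L1.symm.trans (comm1.trans R1)
  have hg_h : g * h = h := by
    have hc := congrArg (· * h) E1
    simp only [mul_assoc] at hc
    rw [h1, hh] at hc
    exact hc.symm
  refine ⟨hg_h, ?_⟩
  -- commuting of f*h and f*(h*g) in fSf
  have hpp' : (f * h) * (f * h) = f * h := by
    rw [mul_assoc, ← mul_assoc h f h, h2, hh]
  have hfp : f * (f * h) = f * h := by rw [← mul_assoc, hf]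
  have hpf : (f * h) * f = f * h := by rw [mul_assoc, h2]
  have hqq' : (f * (h * g)) * (f * (h * g)) = f * (h * g) := by
    simp only [mul_assoc]
    rw [sw_w2 hgf, sw_w3 S2]
  have hfq : f * (f * (h * g)) = f * (h * g) := by rw [← mul_assoc, hf]
  have hqf : (f * (h * g)) * f = f * (h * g) := by
    simp only [mul_assoc]
    rw [hgf]
  have comm2 := sw_idem_comm hS hf hfp hpf hpp' hfq hqf hqq'
  have L2 : (f * h) * (f * (h * g)) = f * (h * g) := by
    simp only [mul_assoc]
    rw [sw_w2 h2, sw_w2 hh]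
  have R2 : (f * (h * g)) * (f * h) = f * h := by
    simp only [mul_assoc]
    rw [sw_w2 hgf, hg_h, hh]
  have E2 : f * (h * g) = f * h := L2.symm.trans (comm2.trans R2)
  have t1 : h * (f * (h * g)) = h * g := by rw [← mul_assoc, h2, ← mul_assoc, hh]
  have t2 : h * (f * h) = h := by rw [← mul_assoc, h2, hh]
  rw [← t1, E2, t2]

theorem sandwich_exists (hS : LocallyInverse S) (e f : S)
    (he : IsIdem e) (hf : IsIdem f) :
    ∃ g : S, IsIdem g ∧ ∀ h : S, IsIdem h →
      ((e * h = h ∧ h * f = h) ↔ (g * h = h ∧ h * g = h)) := by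
  have he' : e * e = e := he
  have hf' : f * f = f := hf
  obtain ⟨x, hx1, hx2⟩ := hS.1 (f * e)
  have hx2' : x * f * e * x = x := by rw [mul_assoc x f e]; exact hx2
  have hgg : (e * x * f) * (e * x * f) = e * x * f := by
    simp only [mul_assoc]
    rw [sw_w4 hx2']
  have heg : e * (e * x * f) = e * x * f := by rw [← mul_assoc, ← mul_assoc, he']
  have hgf : (e * x * f) * f = e * x * f := by rw [mul_assoc, hf']
  have hfge : f * (e * x * f) * e = f * e := by
    have hx1' := hx1
    simp only [mul_assoc] at hx1' ⊢
    exact hx1'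
  refine ⟨e * x * f, hgg, fun h hh0 => ?_⟩
  have hh : h * h = h := hh0
  constructor
  · rintro ⟨h1, h2⟩
    exact sw_key hS he' hf' heg hgf hfge hh h1 h2
  · rintro ⟨h1, h2⟩
    constructor
    · calc e * h = e * ((e * x * f) * h) := by rw [h1]
        _ = (e * x * f) * h := by rw [← mul_assoc, heg]
        _ = h := h1
    · calc h * f = (h * (e * x * f)) * f := by rw [h2]
        _ = h * (e * x * f) := by rw [mul_assoc, hgf]
        _ = h := h2
end

section
/- Let S be a locally inverse semigroup, s, t ∈ S, s' ∈ V(s), t' ∈ V(t), and let g = (t*t') ∧ (s'*s). Then s*t is R-related to s*g, s*g is L-related to g, g is R-related to g*t, and g*t is L-related to s*t. -/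
variable {S : Type*} [Semigroup S]

/-- Helper: from `a*b = c` deduce `a*(b*z) = c*z`. -/
theorem tailize {T : Type*} [Semigroup T] {a b c : T} (h : a * b = c) (z : T) :
    a * (b * z) = c * z := by rw [← mul_assoc, h]

/-- If `a` and `b` are mutual right multiples, they are R-related. -/
theorem rrel_of {T : Type*} [Semigroup T] {a b u v : T}
    (h1 : a = b * u) (h2 : b = a * v) : RRel a b := by
  have sub : ∀ p q r : T, p = q * r →
      (insert p {x | ∃ s, x = p * s} : Set T) ⊆ insert q {x | ∃ s, x = q * s} := by
    intro p q r hp x hx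
    simp only [Set.mem_insert_iff, Set.mem_setOf_eq] at hx ⊢
    rcases hx with rfl | ⟨w, rfl⟩
    · exact Or.inr ⟨r, hp⟩
    · exact Or.inr ⟨r * w, by rw [hp, mul_assoc]⟩
  exact Set.Subset.antisymm (sub a b u h1) (sub b a v h2)

/-- If `a` and `b` are mutual left multiples, they are L-related. -/
theorem lrel_of {T : Type*} [Semigroup T] {a b u v : T}
    (h1 : a = u * b) (h2 : b = v * a) : LRel a b := by
  have sub : ∀ p q r : T, p = r * q →
      (insert p {x | ∃ s, x = s * p} : Set T) ⊆ insert q {x | ∃ s, x = s * q} := by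
    intro p q r hp x hx
    simp only [Set.mem_insert_iff, Set.mem_setOf_eq] at hx ⊢
    rcases hx with rfl | ⟨w, rfl⟩
    · exact Or.inr ⟨r, hp⟩
    · exact Or.inr ⟨w * r, by rw [hp, ← mul_assoc]⟩
  exact Set.Subset.antisymm (sub a b u h1) (sub b a v h2)

/-- The key abstract computation: if `g` is an idempotent with `e*g = g`, `g*f = g`,
and `x` satisfies `f*e*x*(f*e) = f*e`, `e*x = x`, `x*f = x`, `g*x = x`, `x*g = x`,
then `g = x`. -/
theorem meet_key {T : Type*} [Semigroup T] (e f g x : T)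
    (hgg : g * g = g) (heg : e * g = g) (hgf : g * f = g)
    (hfexfe : f * e * x * (f * e) = f * e) (hex : e * x = x) (hxf : x * f = x)
    (hgx : g * x = x) (hxg : x * g = x) : g = x := by
  have Gft : ∀ z, g * (f * z) = g * z := fun z => by rw [← mul_assoc, hgf]
  have Ext : ∀ z, e * (x * z) = x * z := fun z => by rw [← mul_assoc, hex]
  have Xft : ∀ z, x * (f * z) = x * z := fun z => by rw [← mul_assoc, hxf]
  have step : g * (f * (e * g)) = g := by rw [Gft, heg, hgg]
  have exp : f * (e * g) = f * (e * (x * (f * (e * g)))) := by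
    conv_lhs => rw [← mul_assoc, ← hfexfe]
    simp only [mul_assoc]
  calc g = g * (f * (e * g)) := step.symm
    _ = g * (f * (e * (x * (f * (e * g))))) := by conv_lhs => rw [exp]
    _ = x := by rw [Gft, Ext, Xft, heg, hxg, hgx]

theorem product_sandwich_green (hS : LocallyInverse S) (s t s' t' g : S)
    (hs' : IsInv s s') (ht' : IsInv t t')
    (hg : IsSandwich (t * t') (s' * s) g) :
    RRel (s * t) (s * g) ∧ LRel (s * g) g ∧ RRel g (g * t) ∧ LRel (g * t) (s * t) := by
  obtain ⟨hreg, -⟩ := hS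
  obtain ⟨hs1, hs2⟩ := hs'
  obtain ⟨ht1, ht2⟩ := ht'
  obtain ⟨hggI, hiff⟩ := hg
  have hgg : g * g = g := hggI
  -- tail lemmas for the given inverses
  have Ss : ∀ z, s * (s' * (s * z)) = s * z := by
    have h := fun z => tailize hs1 z
    simpa only [mul_assoc] using h
  have St : ∀ z, s' * (s * (s' * z)) = s' * z := by
    have h := fun z => tailize hs2 z
    simpa only [mul_assoc] using h
  have Tt : ∀ z, t * (t' * (t * z)) = t * z := by
    have h := fun z => tailize ht1 z
    simpa only [mul_assoc] using h
  have ht1N : t * (t' * t) = t := by rw [← mul_assoc]; exact ht1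
  -- the sandwich element is dominated by e = t*t' and f = s'*s
  obtain ⟨heg, hgf⟩ : (t * t') * g = g ∧ g * (s' * s) = g :=
    (hiff g hggI).mpr ⟨hgg, hgg⟩
  have hegN : t * (t' * g) = g := by rw [← mul_assoc]; exact heg
  have Gft : ∀ z, g * (s' * (s * z)) = g * z := by
    have h := fun z => tailize hgf z
    simpa only [mul_assoc] using h
  -- take an inverse y of f*e and set x := e*y*f
  obtain ⟨y, hy1, hy2⟩ := hreg ((s' * s) * (t * t'))
  have Y2t : ∀ z, y * (s' * (s * (t * (t' * (y * z))))) = y * z := by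
    have h := fun z => tailize hy2 z
    simpa only [mul_assoc] using h
  have hy1N : s' * (s * (t * (t' * (y * (s' * (s * (t * t'))))))) = s' * (s * (t * t')) := by
    simpa only [mul_assoc] using hy1
  set x : S := (t * t') * (y * (s' * s)) with hxdef
  have hxx : x * x = x := by
    rw [hxdef]; simp only [mul_assoc, Y2t]
  have hex : (t * t') * x = x := by
    rw [hxdef]; simp only [mul_assoc, Tt]
  have hxf : x * (s' * s) = x := by
    rw [hxdef]; simp only [mul_assoc, St]
  have hfexfe : (s' * s) * (t * t') * x * ((s' * s) * (t * t')) = (s' * s) * (t * t') := by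
    rw [hxdef]; simp only [mul_assoc, Tt, St]
    simpa only [mul_assoc] using hy1
  obtain ⟨hgx, hxg⟩ : g * x = x ∧ x * g = x := (hiff x hxx).mp ⟨hex, hxf⟩
  -- the crucial identity: g = x, hence f*(g*e) = f*e
  have g_eq : g = x := meet_key (t * t') (s' * s) g x hgg heg hgf hfexfe hex hxf hgx hxg
  have hfge : (s' * s) * (g * (t * t')) = (s' * s) * (t * t') := by
    rw [g_eq, hxdef]; simp only [mul_assoc, Tt, St]
    simpa only [mul_assoc] using hy1
  have Kt : ∀ z, s' * (s * (g * (t * (t' * z)))) = s' * (s * (t * (t' * z))) := by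
    have h := fun z => tailize hfge z
    simpa only [mul_assoc] using h
  -- hence s*(g*t) = s*t
  have mid : (s' * s) * (g * ((t * t') * t)) = (s' * s) * ((t * t') * t) := by
    simp only [mul_assoc]; exact Kt t
  have h1 : s * ((s' * s) * (g * ((t * t') * t))) = s * (g * t) := by
    simp only [mul_assoc, Ss, ht1N]
  have h2 : s * ((s' * s) * (g * ((t * t') * t))) = s * t := by
    rw [mid]; simp only [mul_assoc, Ss, ht1N]
  have sgt : s * (g * t) = s * t := h1.symm.trans h2
  -- the four witnesses
  have e1 : (s * g) * t = s * t := by rw [mul_assoc]; exact sgt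
  have e2 : (s * t) * (t' * g) = s * g := by simp only [mul_assoc, hegN]
  have e3 : (g * s') * (s * g) = g := by simp only [mul_assoc, Gft, hgg]
  have e4 : (g * t) * (t' * g) = g := by simp only [mul_assoc, hegN, hgg]
  have e5 : (g * s') * (s * t) = g * t := by simp only [mul_assoc, Gft]
  exact ⟨rrel_of e1.symm e2.symm, lrel_of rfl e3.symm,
    rrel_of e4.symm rfl, lrel_of e5.symm sgt.symm⟩
end
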